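/- Let F(z,t) = exp((i/2)(kz + k³t + φ + iθ)) + exp(-(i/2)(kz + k³t + φ + iθ)) with k, φ, θ real. Then F satisfies the Hirota bilinear equations (D_t + D_z³) F₊·F₋ = 0 and D_z² F₊·F₋ = 0, where F₊(z,t) := F(z+K,t), F₋(z,t) := F(z-K,t), provided k = (2m+1)π/(2K) for some integer m. -/

import Mathlib

open Complex Real

/-- z-derivative of a function of (z,t). -/
noncomputable def dz (f : ℂ → ℂ → ℂ) : ℂ → ℂ → ℂ := fun z t => deriv (fun w => f w t) z

/-- t-derivative of a function of (z,t). -/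
noncomputable def dt (f : ℂ → ℂ → ℂ) : ℂ → ℂ → ℂ := fun z t => deriv (fun s => f z s) t

/-!
Write `F = e^ξ + e^{-ξ}` with `ξ = a z + b t + f`, `a = ik/2`, `b = ik³/2`. A shift `z ↦ z ± K`
only rescales the two exponentials, so `F₊` and `F₋` are combinations `p e^ξ + q e^{-ξ}` of the same
pair of exponentials. For two such combinations every Hirota derivative is a constant, because
`D_z`, `D_t` kill `e^ξ·e^ξ` and `e^{-ξ}·e^{-ξ}` and `e^ξ e^{-ξ} = 1`. The first equation then reduces to
the dispersion relation `b = -4a³`; the second to `e^{ikK} + e^{-ikK} = 2 cos(kK) = 0`, which is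
the quantisation `k = (2m+1)π/(2K)`.
-/

noncomputable section

def expPair (p q c e f : ℂ) : ℂ → ℂ → ℂ :=
  fun z t => p * exp (c * z + e * t + f) + q * exp (-(c * z + e * t + f))

def hirotaDt (g₁ g₂ : ℂ → ℂ → ℂ) (z t : ℂ) : ℂ :=
  dt g₁ z t * g₂ z t - g₁ z t * dt g₂ z t

def hirotaDz2 (g₁ g₂ : ℂ → ℂ → ℂ) (z t : ℂ) : ℂ :=
  dz (dz g₁) z t * g₂ z t - 2 * dz g₁ z t * dz g₂ z t + g₁ z t * dz (dz g₂) z t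

def hirotaDz3 (g₁ g₂ : ℂ → ℂ → ℂ) (z t : ℂ) : ℂ :=
  dz (dz (dz g₁)) z t * g₂ z t - 3 * dz (dz g₁) z t * dz g₂ z t
    + 3 * dz g₁ z t * dz (dz g₂) z t - g₁ z t * dz (dz (dz g₂)) z t

variable {p q p₁ q₁ p₂ q₂ c e f : ℂ}

theorem hasDerivAt_exp_add_exp_neg {ξ : ℂ → ℂ} {c w : ℂ} (hξ : HasDerivAt ξ c w) (p q : ℂ) :
    HasDerivAt (fun w => p * exp (ξ w) + q * exp (-ξ w))
      (c * p * exp (ξ w) - c * q * exp (-ξ w)) w :=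
  have hneg : HasDerivAt (fun w => -ξ w) (-c) w := hξ.neg
  ((hξ.cexp.const_mul p).add (hneg.cexp.const_mul q)).congr_deriv (by ring)

theorem dz_expPair : dz (expPair p q c e f) = expPair (c * p) (-(c * q)) c e f := by
  funext z t
  have hξ : HasDerivAt (fun w => c * w + e * t + f) c z := by
    simpa using ((hasDerivAt_id z).const_mul c).add_const (e * t + f)
  simp only [dz, expPair]
  rw [(hasDerivAt_exp_add_exp_neg hξ p q).deriv]
  ring

theorem dt_expPair : dt (expPair p q c e f) = expPair (e * p) (-(e * q)) c e f := by
  funext z t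
  have hξ : HasDerivAt (fun s => c * z + e * s + f) e t := by
    simpa using (((hasDerivAt_id t).const_mul e).const_add (c * z)).add_const f
  simp only [dt, expPair]
  rw [(hasDerivAt_exp_add_exp_neg hξ p q).deriv]
  ring

theorem expPair_add_left (s z t : ℂ) :
    expPair p q c e f (z + s) t = expPair (p * exp (c * s)) (q * exp (-(c * s))) c e f z t := by
  simp only [expPair]
  rw [mul_assoc, mul_assoc, ← Complex.exp_add, ← Complex.exp_add]
  ring_nf

theorem cexp_mul_cexp_neg (ξ : ℂ) : exp ξ * exp (-ξ) = 1 := by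
  rw [← Complex.exp_add, add_neg_cancel, Complex.exp_zero]

theorem hirotaDt_expPair (z t : ℂ) :
    hirotaDt (expPair p₁ q₁ c e f) (expPair p₂ q₂ c e f) z t
      = 2 * e * (p₁ * q₂ - q₁ * p₂) := by
  simp only [hirotaDt, dt_expPair, expPair]
  linear_combination (2 * e * (p₁ * q₂ - q₁ * p₂)) * cexp_mul_cexp_neg (c * z + e * t + f)

theorem hirotaDz2_expPair (z t : ℂ) :
    hirotaDz2 (expPair p₁ q₁ c e f) (expPair p₂ q₂ c e f) z t
      = 4 * c ^ 2 * (p₁ * q₂ + q₁ * p₂) := by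
  simp only [hirotaDz2, dz_expPair, expPair]
  linear_combination (4 * c ^ 2 * (p₁ * q₂ + q₁ * p₂)) * cexp_mul_cexp_neg (c * z + e * t + f)

theorem hirotaDz3_expPair (z t : ℂ) :
    hirotaDz3 (expPair p₁ q₁ c e f) (expPair p₂ q₂ c e f) z t
      = 8 * c ^ 3 * (p₁ * q₂ - q₁ * p₂) := by
  simp only [hirotaDz3, dz_expPair, expPair]
  linear_combination (8 * c ^ 3 * (p₁ * q₂ - q₁ * p₂)) * cexp_mul_cexp_neg (c * z + e * t + f)

theorem exp_add_exp_neg_eq_zero_of_quarterPeriod {K k : ℝ} (hK : K ≠ 0) (m : ℤ)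
    (hk : k = (2 * m + 1) * π / (2 * K)) :
    exp (k * K * I) + exp (-(k * K * I)) = 0 := by
  have hK' : (K : ℂ) ≠ 0 := by exact_mod_cast hK
  have hcos : cos (k * K : ℂ) = 0 :=
    cos_eq_zero_iff.mpr ⟨m, by rw [hk]; push_cast; field_simp⟩
  rw [← neg_mul, ← two_cos, hcos, mul_zero]

end

/-- F(z,t) = e^{(i/2)(kz+k³t+φ+iθ)} + e^{-(i/2)(kz+k³t+φ+iθ)} with k = (2m+1)π/(2K)
    satisfies the Hirota bilinear mKdV equations
    (D_t + D_z³) F₊·F₋ = 0 and D_z² F₊·F₋ = 0, where F₊(z,t) = F(z+K,t), F₋(z,t) = F(z-K,t). -/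
theorem hirota_bilinear_elliptic_mKdV (K : ℝ) (hK : 0 < K) (m : ℤ) (k φ θ : ℝ)
    (hk : k = (2 * m + 1) * π / (2 * K))
    (F Fp Fm : ℂ → ℂ → ℂ)
    (hF : ∀ z t, F z t =
        Complex.exp ((Complex.I / 2) * (k * z + k ^ 3 * t + φ + Complex.I * θ))
      + Complex.exp (-((Complex.I / 2) * (k * z + k ^ 3 * t + φ + Complex.I * θ))))
    (hFp : ∀ z t, Fp z t = F (z + K) t)
    (hFm : ∀ z t, Fm z t = F (z - K) t) :
    ∀ z t : ℂ,
      (dt Fp z t * Fm z t - Fp z t * dt Fm z t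
        + dz (dz (dz Fp)) z t * Fm z t - 3 * dz (dz Fp) z t * dz Fm z t
        + 3 * dz Fp z t * dz (dz Fm) z t - Fp z t * dz (dz (dz Fm)) z t = 0)
      ∧ (dz (dz Fp) z t * Fm z t - 2 * dz Fp z t * dz Fm z t
          + Fp z t * dz (dz Fm) z t = 0) := by
  set a : ℂ := I / 2 * k
  set b : ℂ := I / 2 * k ^ 3
  set A := exp (a * K)
  set B := exp (-(a * K))
  have hF' : F = expPair 1 1 a b (I / 2 * (φ + I * θ)) := by
    funext z t; rw [hF]; simp only [expPair, a, b]; ring_nf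
  have hFp' : Fp = expPair A B a b (I / 2 * (φ + I * θ)) := by
    funext z t; rw [hFp, hF', expPair_add_left]; simp only [one_mul, A, B]
  have hFm' : Fm = expPair B A a b (I / 2 * (φ + I * θ)) := by
    funext z t
    rw [hFm, hF', sub_eq_add_neg, expPair_add_left]
    simp only [one_mul, A, B, mul_neg, neg_neg]
  have hdispersion : b = -4 * a ^ 3 := by
    linear_combination (I * (k : ℂ) ^ 3 / 2) * I_sq
  have hquarter : A * A + B * B = 0 := by
    have h2aK : (k : ℂ) * K * I = a * K + a * K := by ring
    rw [← Complex.exp_add, ← Complex.exp_add, ← neg_add, ← h2aK]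
    exact exp_add_exp_neg_eq_zero_of_quarterPeriod hK.ne' m hk
  intro z t
  suffices hirotaDt Fp Fm z t + hirotaDz3 Fp Fm z t = 0 ∧ hirotaDz2 Fp Fm z t = 0 by
    simp only [hirotaDt, hirotaDz2, hirotaDz3] at this
    exact ⟨by linear_combination this.1, this.2⟩
  rw [hFp', hFm', hirotaDt_expPair, hirotaDz3_expPair, hirotaDz2_expPair]
  constructor
  · linear_combination 2 * (A * A - B * B) * hdispersion
  · linear_combination 4 * a ^ 2 * hquarter
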